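/- If G : [0,∞) → [0,∞) is s-convex in the second sense for some 0 < s ≤ 1, and G is integrable on [m1, m2] with 0 ≤ m1 < m2, then 2^{s-1} G((m1+m2)/2) ≤ (1/(m2-m1)) ∫_{m1}^{m2} G(x) dx ≤ (G(m1) + G(m2))/(s+1). -/

import Mathlib

/-!
Integrating the midpoint instance `G ((m1 + m2) / 2) ≤ 2⁻ˢ (G x + G (m1 + m2 - x))` over
`[m1, m2]`, where the reflection `x ↦ m1 + m2 - x` preserves the integral, gives the left
inequality. For the right one, substitute `x = (1 - t) m1 + t m2` and integrate the bound
`G x ≤ (1 - t)ˢ G m1 + tˢ G m2` over `t ∈ [0, 1]`, using `∫₀¹ tˢ = ∫₀¹ (1 - t)ˢ = 1 / (s + 1)`.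
-/

open MeasureTheory intervalIntegral

theorem intervalIntegral.integral_comp_add_sub (f : ℝ → ℝ) (a b : ℝ) :
    ∫ x in a..b, f (a + b - x) = ∫ x in a..b, f x := by
  simp [integral_comp_sub_left]

theorem mul_le_two_mul_integral_of_le_add_comp_add_sub {f : ℝ → ℝ} {a b c : ℝ} (hab : a ≤ b)
    (hf : IntervalIntegrable f volume a b) (h : ∀ x ∈ Set.Icc a b, c ≤ f x + f (a + b - x)) :
    (b - a) * c ≤ 2 * ∫ x in a..b, f x := by
  have hf' : IntervalIntegrable (fun x => f (a + b - x)) volume a b := by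
    simpa using (hf.comp_sub_left (a + b)).symm
  calc (b - a) * c = ∫ _ in a..b, c := by simp
    _ ≤ ∫ x in a..b, (f x + f (a + b - x)) :=
      integral_mono_on hab intervalIntegrable_const (hf.add hf') h
    _ = 2 * ∫ x in a..b, f x := by
      rw [integral_add hf hf', integral_comp_add_sub]; ring

theorem rpow_two_sub_one_mul_le_average {f : ℝ → ℝ} {a b s : ℝ} (hab : a < b)
    (hf : IntervalIntegrable f volume a b)
    (h : ∀ x ∈ Set.Icc a b, f ((a + b) / 2) ≤ (1 / 2) ^ s * f x + (1 / 2) ^ s * f (a + b - x)) :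
    2 ^ (s - 1) * f ((a + b) / 2) ≤ 1 / (b - a) * ∫ x in a..b, f x := by
  have htwo : (2 : ℝ) ^ s * (1 / 2) ^ s = 1 := by
    rw [← Real.mul_rpow zero_le_two (by norm_num)]; norm_num
  have hsum : ∀ x ∈ Set.Icc a b, 2 ^ s * f ((a + b) / 2) ≤ f x + f (a + b - x) := fun x hx => by
    have := mul_le_mul_of_nonneg_left (h x hx) (Real.rpow_nonneg zero_le_two s)
    linear_combination this + (f x + f (a + b - x)) * htwo
  have := mul_le_two_mul_integral_of_le_add_comp_add_sub hab.le hf hsum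
  rw [Real.rpow_sub_one two_ne_zero, one_div_mul_eq_div, le_div_iff₀ (sub_pos.2 hab)]
  linarith

theorem intervalIntegral.integral_eq_sub_mul_integral_unitInterval (f : ℝ → ℝ) (a b : ℝ) :
    ∫ x in a..b, f x = (b - a) * ∫ t in (0 : ℝ)..1, f ((1 - t) * a + t * b) := by
  rcases eq_or_ne a b with rfl | hab
  · simp
  have hba : b - a ≠ 0 := sub_ne_zero.2 hab.symm
  have := integral_comp_mul_add f hba a (a := 0) (b := 1)
  simp only [mul_zero, zero_add, mul_one, sub_add_cancel, smul_eq_mul] at this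
  rw [show (fun t => f ((1 - t) * a + t * b)) = fun t => f ((b - a) * t + a) by
    ext t; ring_nf, this]
  field_simp

theorem IntervalIntegrable.comp_unitInterval {f : ℝ → ℝ} {a b : ℝ}
    (hf : IntervalIntegrable f volume a b) :
    IntervalIntegrable (fun t => f ((1 - t) * a + t * b)) volume 0 1 := by
  have hfun : (fun t => f ((1 - t) * a + t * b)) = fun t => f ((b - a) * t + a) := by
    ext t; ring_nf
  rcases eq_or_ne a b with rfl | hab
  · simp [hfun]
  have hba : b - a ≠ 0 := sub_ne_zero.2 hab.symm
  simpa [hfun, hba] using (hf.comp_add_right a).comp_mul_left (c := b - a)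

theorem integral_rpow_zero_one {s : ℝ} (hs : -1 < s) :
    ∫ t in (0 : ℝ)..1, t ^ s = 1 / (s + 1) := by
  rw [integral_rpow (Or.inl hs), Real.one_rpow, Real.zero_rpow (by linarith)]
  ring

theorem integral_one_sub_rpow_zero_one {s : ℝ} (hs : -1 < s) :
    ∫ t in (0 : ℝ)..1, (1 - t) ^ s = 1 / (s + 1) := by
  simp [integral_comp_sub_left (fun t : ℝ => t ^ s), integral_rpow_zero_one hs]

theorem average_le_of_le_rpow_combination {f : ℝ → ℝ} {a b s : ℝ} (hab : a < b) (hs : -1 < s)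
    (hf : IntervalIntegrable f volume a b)
    (h : ∀ t ∈ Set.Icc (0 : ℝ) 1, f ((1 - t) * a + t * b) ≤ (1 - t) ^ s * f a + t ^ s * f b) :
    1 / (b - a) * ∫ x in a..b, f x ≤ (f a + f b) / (s + 1) := by
  have hpow : IntervalIntegrable (fun t : ℝ => t ^ s) volume 0 1 := intervalIntegrable_rpow' hs
  have hpow' : IntervalIntegrable (fun t : ℝ => (1 - t) ^ s) volume 0 1 := by
    simpa using (hpow.comp_sub_left 1).symm
  rw [integral_eq_sub_mul_integral_unitInterval, ← mul_assoc,
    one_div_mul_cancel (sub_pos.2 hab).ne', one_mul]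
  calc ∫ t in (0 : ℝ)..1, f ((1 - t) * a + t * b)
      ≤ ∫ t in (0 : ℝ)..1, ((1 - t) ^ s * f a + t ^ s * f b) :=
        integral_mono_on zero_le_one hf.comp_unitInterval
          ((hpow'.mul_const _).add (hpow.mul_const _)) h
    _ = (f a + f b) / (s + 1) := by
      rw [integral_add (hpow'.mul_const _) (hpow.mul_const _), intervalIntegral.integral_mul_const,
        intervalIntegral.integral_mul_const, integral_rpow_zero_one hs, integral_one_sub_rpow_zero_one hs]
      ring

theorem s_convex_hh_general (G : ℝ → ℝ) (s : ℝ) (hs0 : 0 < s)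
    (hsc : ∀ a b ζ1 ζ2 : ℝ, 0 ≤ a → 0 ≤ b → 0 ≤ ζ1 → 0 ≤ ζ2 → ζ1 + ζ2 = 1 →
      G (ζ1 * a + ζ2 * b) ≤ ζ1 ^ s * G a + ζ2 ^ s * G b)
    (m1 m2 : ℝ) (hm1 : 0 ≤ m1) (hlt : m1 < m2)
    (hint : IntervalIntegrable G volume m1 m2) :
    (2:ℝ) ^ (s - 1) * G ((m1 + m2) / 2) ≤ (1 / (m2 - m1)) * ∫ x in m1..m2, G x ∧
      (1 / (m2 - m1)) * ∫ x in m1..m2, G x ≤ (G m1 + G m2) / (s + 1) := by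
  have hm2 : 0 ≤ m2 := hm1.trans hlt.le
  refine ⟨rpow_two_sub_one_mul_le_average hlt hint fun x hx => ?_,
    average_le_of_le_rpow_combination hlt (by linarith) hint fun t ht => ?_⟩
  · have := hsc x (m1 + m2 - x) (1 / 2) (1 / 2) (hm1.trans hx.1) (by linarith [hx.2])
      (by norm_num) (by norm_num) (by norm_num)
    rwa [show 1 / 2 * x + 1 / 2 * (m1 + m2 - x) = (m1 + m2) / 2 by ring] at this
  · exact hsc m1 m2 (1 - t) t hm1 hm2 (by linarith [ht.2]) ht.1 (by ring)

theorem s_convex_hh (G : ℝ → ℝ) (s : ℝ) (hs0 : 0 < s) (hs1 : s ≤ 1)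
    (hnonneg : ∀ x, 0 ≤ x → 0 ≤ G x)
    (hsc : ∀ a b ζ1 ζ2 : ℝ, 0 ≤ a → 0 ≤ b → 0 ≤ ζ1 → 0 ≤ ζ2 → ζ1 + ζ2 = 1 →
      G (ζ1 * a + ζ2 * b) ≤ ζ1 ^ s * G a + ζ2 ^ s * G b)
    (m1 m2 : ℝ) (hm1 : 0 ≤ m1) (hlt : m1 < m2)
    (hint : IntervalIntegrable G volume m1 m2) :
    (2:ℝ) ^ (s - 1) * G ((m1 + m2) / 2) ≤ (1 / (m2 - m1)) * ∫ x in m1..m2, G x ∧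
      (1 / (m2 - m1)) * ∫ x in m1..m2, G x ≤ (G m1 + G m2) / (s + 1) :=
  s_convex_hh_general G s hs0 hsc m1 m2 hm1 hlt hint
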